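/- Recursive generation of triples for P₁: for all natural numbers p, q with 1 ≤ p, 1 ≤ q, p ≠ q, if ω₁(p, q) = 1 and r = p ^^^ q, then ω₁(2r, 2q) = 1, ω₁(2r+1, 2q+1) = 1, ω₁(2r+1, 2q) = 1 and ω₁(2r, 2q+1) = 1; that is, the triple (p,q,r) generates the triples (2r,2q,2p), (2r+1,2q+1,2p), (2r+1,2q,2p+1) and (2r,2q+1,2p+1). -/

import Mathlib

/-!
Two identities carry the argument: for distinct nonzero `p, q`, the twist is antisymmetric,
`ω₁(q, p) = -ω₁(p, q)`, and invariant under cyclic rotation of the triple `(p, q, p ^^^ q)`,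
`ω₁(q, p ^^^ q) = ω₁(p, q)`. Both follow by strong induction from the recursion, because XOR
commutes with splitting off the last bit. For a triple with `ω₁(p, q) = 1` and `r = p ^^^ q` they
give `ω₁(q, r) = 1` and `ω₁(r, q) = -1`, and one step of the recursion turns these into the four
claimed values.
-/

/-- Twist of the Cayley–Dickson doubling product `P₁ : (a,b)(c,d) = (ca − db*, a*d + cb)`. -/
def omega1 (p q : ℕ) : ℤ :=
  if p = 0 ∧ q = 0 then 1
  else if p % 2 = 0 then
    if q % 2 = 0 then omega1 (q / 2) (p / 2)
    else if 0 < p / 2 then -omega1 (p / 2) (q / 2) else 1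
  else
    if q % 2 = 0 then omega1 (q / 2) (p / 2)
    else if 0 < p / 2 then omega1 (q / 2) (p / 2) else -1
termination_by p + q
decreasing_by all_goals omega

namespace Nat

theorem two_mul_xor_two_mul (a b : ℕ) : (2 * a) ^^^ (2 * b) = 2 * (a ^^^ b) := by
  simpa [Nat.bit, two_mul] using xor_bit false a false b

theorem two_mul_add_one_xor_two_mul (a b : ℕ) :
    (2 * a + 1) ^^^ (2 * b) = 2 * (a ^^^ b) + 1 := by
  simpa [Nat.bit, two_mul] using xor_bit true a false b

theorem two_mul_xor_two_mul_add_one (a b : ℕ) :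
    (2 * a) ^^^ (2 * b + 1) = 2 * (a ^^^ b) + 1 := by
  simpa [Nat.bit, two_mul] using xor_bit false a true b

theorem two_mul_add_one_xor_two_mul_add_one (a b : ℕ) :
    (2 * a + 1) ^^^ (2 * b + 1) = 2 * (a ^^^ b) := by
  simpa [Nat.bit, two_mul] using xor_bit true a true b

theorem xor_pos_of_ne {a b : ℕ} (h : a ≠ b) : 0 < a ^^^ b :=
  pos_of_ne_zero (xor_eq_zero_iff.not.2 h)

theorem xor_ne_right {a b : ℕ} (ha : 0 < a) : a ^^^ b ≠ b := fun h =>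
  ha.ne' (xor_left_inj.1 (h.trans (zero_xor b).symm))

end Nat

theorem omega1_even_even {a b : ℕ} (hab : a ≠ 0 ∨ b ≠ 0) :
    omega1 (2 * a) (2 * b) = omega1 b a := by
  rw [omega1]; simp; omega

theorem omega1_even_odd {a : ℕ} (b : ℕ) (ha : 0 < a) :
    omega1 (2 * a) (2 * b + 1) = -omega1 a b := by
  rw [omega1]; simp [Nat.add_mod, Nat.add_div, ha]

theorem omega1_zero_odd (b : ℕ) : omega1 0 (2 * b + 1) = 1 := by
  rw [omega1]; simp [Nat.add_mod]

theorem omega1_odd_even (a b : ℕ) : omega1 (2 * a + 1) (2 * b) = omega1 b a := by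
  rw [omega1]; simp [Nat.add_mod, Nat.add_div]

theorem omega1_odd_odd {a : ℕ} (b : ℕ) (ha : 0 < a) :
    omega1 (2 * a + 1) (2 * b + 1) = omega1 b a := by
  rw [omega1]; simp [Nat.add_mod, Nat.add_div, ha]

theorem omega1_one_odd (b : ℕ) : omega1 1 (2 * b + 1) = -1 := by
  rw [omega1]; simp [Nat.add_mod]

theorem omega1_zero_right_and_left (n : ℕ) : omega1 n 0 = 1 ∧ omega1 0 n = 1 := by
  induction n using Nat.strong_induction_on with
  | _ n ih =>
  obtain ⟨k, rfl | rfl⟩ := Nat.even_or_odd' n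
  · rcases Nat.eq_zero_or_pos k with rfl | hk
    · simp [omega1]
    have ⟨ihr, ihl⟩ := ih k (by omega)
    exact ⟨by simpa using (omega1_even_even (b := 0) (by omega)).trans ihl,
      by simpa using (omega1_even_even (a := 0) (by omega)).trans ihr⟩
  · exact ⟨by simpa using (omega1_odd_even k 0).trans (ih k (by omega)).2, omega1_zero_odd k⟩

theorem omega1_zero_right (n : ℕ) : omega1 n 0 = 1 := (omega1_zero_right_and_left n).1

theorem omega1_zero_left (n : ℕ) : omega1 0 n = 1 := (omega1_zero_right_and_left n).2

theorem omega1_self {n : ℕ} (hn : 0 < n) : omega1 n n = -1 := by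
  induction n using Nat.strong_induction_on with
  | _ n ih =>
  obtain ⟨k, rfl | rfl⟩ := Nat.even_or_odd' n
  · rw [omega1_even_even (by omega)]
    exact ih k (by omega) (by omega)
  · rcases Nat.eq_zero_or_pos k with rfl | hk
    · exact omega1_one_odd 0
    · rw [omega1_odd_odd k hk]
      exact ih k (by omega) hk

theorem omega1_swap {p q : ℕ} (hp : 0 < p) (hq : 0 < q) (hpq : p ≠ q) :
    omega1 q p = -omega1 p q := by
  induction p using Nat.strong_induction_on generalizing q with
  | _ p ih =>
  obtain ⟨a, rfl | rfl⟩ := Nat.even_or_odd' p <;> obtain ⟨b, rfl | rfl⟩ := Nat.even_or_odd' q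
  · rw [omega1_even_even (by omega), omega1_even_even (by omega),
      ih a (by omega) (by omega) (by omega) (by omega), neg_neg]
  · rw [omega1_odd_even, omega1_even_odd b (by omega), neg_neg]
  · rw [omega1_even_odd a (by omega), omega1_odd_even]
  · rcases Nat.eq_zero_or_pos a with rfl | ha
    · rw [omega1_odd_odd 0 (by omega), omega1_zero_left, omega1_one_odd, neg_neg]
    rcases Nat.eq_zero_or_pos b with rfl | hb
    · rw [omega1_odd_odd 0 ha, omega1_zero_left, omega1_one_odd]
    rw [omega1_odd_odd a hb, omega1_odd_odd b ha, ih a (by omega) ha hb (by omega), neg_neg]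

theorem omega1_xor_cycle {p q : ℕ} (hp : 0 < p) (hq : 0 < q) (hpq : p ≠ q) :
    omega1 q (p ^^^ q) = omega1 p q := by
  induction p using Nat.strong_induction_on generalizing q with
  | _ p ih =>
  have ih_rotated {a b : ℕ} (hap : a < p) (ha : 0 < a) (hb : 0 < b) (hab : a ≠ b) :
      omega1 (a ^^^ b) b = -omega1 a b := by
    rw [omega1_swap hb (Nat.xor_pos_of_ne hab) (Nat.xor_ne_right ha).symm, ih a hap ha hb hab]
  obtain ⟨a, rfl | rfl⟩ := Nat.even_or_odd' p <;> obtain ⟨b, rfl | rfl⟩ := Nat.even_or_odd' q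
  · have ha : 0 < a := by omega
    have hb : 0 < b := by omega
    have hab : a ≠ b := by omega
    rw [Nat.two_mul_xor_two_mul, omega1_even_even (Or.inl hb.ne'),
      omega1_even_even (Or.inl ha.ne'), ih_rotated (by omega) ha hb hab, omega1_swap ha hb hab]
  · have ha : 0 < a := by omega
    rw [Nat.two_mul_xor_two_mul_add_one, omega1_even_odd b ha]
    rcases Nat.eq_zero_or_pos b with rfl | hb
    · rw [Nat.xor_zero, omega1_one_odd, omega1_zero_right]
    rw [omega1_odd_odd _ hb]
    rcases eq_or_ne a b with rfl | hab
    · rw [Nat.xor_self, omega1_zero_left, omega1_self ha, neg_neg]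
    · exact ih_rotated (by omega) ha hb hab
  · have hb : 0 < b := by omega
    rw [Nat.two_mul_add_one_xor_two_mul, omega1_even_odd _ hb, omega1_odd_even]
    rcases Nat.eq_zero_or_pos a with rfl | ha
    · rw [Nat.zero_xor, omega1_self hb, omega1_zero_right, neg_neg]
    rcases eq_or_ne a b with rfl | hab
    · rw [Nat.xor_self, omega1_zero_right, omega1_self hb]
    · rw [ih a (by omega) ha hb hab, omega1_swap ha hb hab]
  · have hab : a ≠ b := by omega
    rw [Nat.two_mul_add_one_xor_two_mul_add_one, omega1_odd_even]
    rcases Nat.eq_zero_or_pos a with rfl | ha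
    · rw [Nat.zero_xor, omega1_self (by omega), omega1_one_odd]
    rcases Nat.eq_zero_or_pos b with rfl | hb
    · rw [Nat.xor_zero, omega1_zero_right, omega1_odd_odd 0 ha, omega1_zero_left]
    rw [omega1_odd_odd b ha, ih_rotated (by omega) ha hb hab, omega1_swap ha hb hab]

/-- Recursive generation of structure-constant triples for the doubling product P1. -/
theorem omega1_triple_generation (p q r : ℕ) (hp : 1 ≤ p) (hq : 1 ≤ q) (hpq : p ≠ q)
    (h : omega1 p q = 1) (hr : r = p ^^^ q) :
    omega1 (2 * r) (2 * q) = 1 ∧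
    omega1 (2 * r + 1) (2 * q + 1) = 1 ∧
    omega1 (2 * r + 1) (2 * q) = 1 ∧
    omega1 (2 * r) (2 * q + 1) = 1 := by
  subst hr
  have hr : 0 < p ^^^ q := Nat.xor_pos_of_ne hpq
  have hqr : omega1 q (p ^^^ q) = 1 := (omega1_xor_cycle hp hq hpq).trans h
  have hrq : omega1 (p ^^^ q) q = -1 := by
    rw [omega1_swap hq hr (Nat.xor_ne_right hp).symm, hqr]
  refine ⟨?_, ?_, ?_, ?_⟩
  · rw [omega1_even_even (Or.inl hr.ne'), hqr]
  · rw [omega1_odd_odd q hr, hqr]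
  · rw [omega1_odd_even, hqr]
  · rw [omega1_even_odd q hr, hrq, neg_neg]
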